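/- Let n ≥ 2 and let B be an n×n complex matrix with Σ_{i,j} |B_{ij}|² = 1. Then (1/2)·( (1/n)·Σ_{i≠j} |(Bᴴ B)_{ij}| + 1/n + Σ_i |B_{ii}|² ) ≤ 1/2 + 1/(2√n). -/

import Mathlib

/-!
Write `a k i = ‖B k i‖`. Each entry of `Bᴴ B` is bounded by `∑ k, a k i * a k j`, so the
off-diagonal `ℓ₁` norm of `Bᴴ B` is at most `∑ k, ((∑ i, a k i)² - ∑ i, (a k i)²)`. Row by row,
splitting off the diagonal entry and applying Cauchy–Schwarz to the other `n - 1` entries gives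
`(∑ i, a k i)² + n (a k k)² ≤ (n + √n) ∑ i, (a k i)²`. Summing over the rows yields
`∑_{i ≠ j} |(Bᴴ B) i j| + n ∑ i, |B i i|² ≤ n + √n - 1`, which is the claim after dividing by `2n`.
-/

open Matrix Finset

/-- Multiplied by `t - 1`, the difference of the two sides is
`(s - (t - 1) d)² + t ((t² - 1) q - s²)`. -/
lemma sq_add_add_sq_mul_sq_le {s d q t : ℝ} (ht : 1 < t) (hs : s ^ 2 ≤ (t ^ 2 - 1) * q) :
    (s + d) ^ 2 + t ^ 2 * d ^ 2 ≤ (t ^ 2 + t) * (q + d ^ 2) := by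
  have key : 0 ≤ (t - 1) * ((t ^ 2 + t) * (q + d ^ 2) - ((s + d) ^ 2 + t ^ 2 * d ^ 2)) := by
    have : (t - 1) * ((t ^ 2 + t) * (q + d ^ 2) - ((s + d) ^ 2 + t ^ 2 * d ^ 2)) =
        (s - (t - 1) * d) ^ 2 + t * ((t ^ 2 - 1) * q - s ^ 2) := by ring
    rw [this]
    have := sub_nonneg.mpr hs
    positivity
  linarith [(mul_nonneg_iff_of_pos_left (sub_pos.mpr ht)).mp key]

lemma sq_sum_add_card_mul_sq_le {ι : Type*} [Fintype ι] [DecidableEq ι]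
    (hcard : 2 ≤ Fintype.card ι) (a : ι → ℝ) (k : ι) :
    (∑ i, a i) ^ 2 + Fintype.card ι * a k ^ 2 ≤
      (Fintype.card ι + √(Fintype.card ι)) * ∑ i, a i ^ 2 := by
  set n := Fintype.card ι
  have hsqrt : (1 : ℝ) < √n := by
    rw [Real.lt_sqrt zero_le_one]
    exact_mod_cast hcard
  have hcs : (∑ i ∈ univ.erase k, a i) ^ 2 ≤ (√n ^ 2 - 1) * ∑ i ∈ univ.erase k, a i ^ 2 := by
    have := sq_sum_le_card_mul_sum_sq (s := univ.erase k) (f := a)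
    rwa [card_erase_of_mem (mem_univ k), card_univ, Nat.cast_sub (by omega),
      ← Real.sq_sqrt (Nat.cast_nonneg n), Nat.cast_one] at this
  have := sq_add_add_sq_mul_sq_le (d := a k) hsqrt hcs
  rwa [Real.sq_sqrt (Nat.cast_nonneg n), sum_erase_add _ _ (mem_univ k),
    sum_erase_add _ _ (mem_univ k)] at this

lemma sum_sum_ne_mul_eq {ι R : Type*} [Fintype ι] [DecidableEq ι] [CommRing R] (x : ι → R) :
    ∑ i, ∑ j ∈ univ.filter (fun j => j ≠ i), x i * x j = (∑ i, x i) ^ 2 - ∑ i, x i ^ 2 := by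
  simp only [filter_ne', ← mul_sum, sum_erase_eq_sub (mem_univ _), sum_sub_distrib,
    sum_mul_sum, sq]

lemma norm_conjTranspose_mul_self_apply_le {𝕜 m n : Type*} [RCLike 𝕜] [Fintype m]
    (B : Matrix m n 𝕜) (i j : n) : ‖(Bᴴ * B) i j‖ ≤ ∑ k, ‖B k i‖ * ‖B k j‖ := by
  rw [mul_apply]
  refine (norm_sum_le _ _).trans (sum_le_sum fun k _ => ?_)
  rw [conjTranspose_apply, norm_mul, norm_star]

lemma sum_sum_ne_norm_conjTranspose_mul_self_le {𝕜 m n : Type*} [RCLike 𝕜] [Fintype m]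
    [Fintype n] [DecidableEq n] (B : Matrix m n 𝕜) :
    ∑ i, ∑ j ∈ univ.filter (fun j => j ≠ i), ‖(Bᴴ * B) i j‖ ≤
      ∑ k, ((∑ i, ‖B k i‖) ^ 2 - ∑ i, ‖B k i‖ ^ 2) := by
  calc ∑ i, ∑ j ∈ univ.filter (fun j => j ≠ i), ‖(Bᴴ * B) i j‖
      ≤ ∑ i, ∑ j ∈ univ.filter (fun j => j ≠ i), ∑ k, ‖B k i‖ * ‖B k j‖ :=
        sum_le_sum fun i _ => sum_le_sum fun j _ => norm_conjTranspose_mul_self_apply_le B i j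
    _ = ∑ k, ∑ i, ∑ j ∈ univ.filter (fun j => j ≠ i), ‖B k i‖ * ‖B k j‖ := by
        simp_rw [sum_comm (γ := m)]
    _ = _ := by simp_rw [sum_sum_ne_mul_eq]

lemma sum_sum_ne_norm_conjTranspose_mul_self_add_card_mul_sum_diag_le {𝕜 ι : Type*} [RCLike 𝕜]
    [Fintype ι] [DecidableEq ι] (hcard : 2 ≤ Fintype.card ι) (B : Matrix ι ι 𝕜) :
    ∑ i, ∑ j ∈ univ.filter (fun j => j ≠ i), ‖(Bᴴ * B) i j‖ +
        Fintype.card ι * ∑ i, ‖B i i‖ ^ 2 ≤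
      (Fintype.card ι + √(Fintype.card ι) - 1) * ∑ k, ∑ i, ‖B k i‖ ^ 2 := by
  calc _ ≤ ∑ k, ((∑ i, ‖B k i‖) ^ 2 - ∑ i, ‖B k i‖ ^ 2) + Fintype.card ι * ∑ k, ‖B k k‖ ^ 2 :=
        add_le_add_left (sum_sum_ne_norm_conjTranspose_mul_self_le B) _
    _ = ∑ k, ((∑ i, ‖B k i‖) ^ 2 + Fintype.card ι * ‖B k k‖ ^ 2 - ∑ i, ‖B k i‖ ^ 2) := by
        rw [mul_sum, ← sum_add_distrib]
        exact sum_congr rfl fun k _ => by ring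
    _ ≤ ∑ k, ((Fintype.card ι + √(Fintype.card ι)) * ∑ i, ‖B k i‖ ^ 2 - ∑ i, ‖B k i‖ ^ 2) :=
        sum_le_sum fun k _ => by
          gcongr
          exact sq_sum_add_card_mul_sq_le hcard (fun i => ‖B k i‖) k
    _ = _ := by
        rw [mul_sum]
        exact sum_congr rfl fun k _ => by ring

/-- Matrix form of Theorem 1: for an `n × n` complex matrix `B` with unit Frobenius
norm, `P_win = (X + 1/n + P_d)/2 ≤ 1/2 + 1/(2√n)`, where `X` is the normalized
off-diagonal `ℓ₁` norm of `Bᴴ B` and `P_d = ∑ i, |B i i|²`. -/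
theorem duality_theorem_one_matrix (n : ℕ) (hn : 2 ≤ n)
    (B : Matrix (Fin n) (Fin n) ℂ)
    (hB : ∑ i, ∑ j, ‖B i j‖ ^ 2 = 1) :
    (1 / 2) * ((1 / n) * (∑ i, ∑ j ∈ univ.filter (fun j => j ≠ i),
        ‖(Bᴴ * B) i j‖) + 1 / n + ∑ i, ‖B i i‖ ^ 2) ≤
      1 / 2 + 1 / (2 * Real.sqrt n) := by
  have key := sum_sum_ne_norm_conjTranspose_mul_self_add_card_mul_sum_diag_le
    (by simpa using hn) B
  rw [Fintype.card_fin, hB, mul_one] at key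
  set X := ∑ i, ∑ j ∈ univ.filter (fun j => j ≠ i), ‖(Bᴴ * B) i j‖
  set D := ∑ i, ‖B i i‖ ^ 2
  have hn0 : (0 : ℝ) < n := by positivity
  calc (1 / 2) * ((1 / n) * X + 1 / n + D) = (X + n * D + 1) / (2 * n) := by
        field_simp
        ring
    _ ≤ (n + √n) / (2 * n) := div_le_div_of_nonneg_right (by linarith) (by positivity)
    _ = 1 / 2 + 1 / (2 * √n) := by
        field_simp
        linear_combination Real.sq_sqrt hn0.le
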